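/- The dimension function H_m is constant on each set F(p), and for every x ∈ Q_m and every ε > 0 the function H_m attains all its possible values already on Q_m ∩ (x − ε, x + ε); that is, H_m(Q_m ∩ (x − ε, x + ε)) = H_m(Q_m) as sets of values. -/

import Mathlib

/-!
The equation `∑ pᵢ log (∑ⱼ γᵢⱼ ^ t) = 0` has a strictly decreasing left-hand side on `(θ, ∞)`,
so its root depends only on `p`: `H_m` is constant on `F(p)`. For the local statement, given `x`
and `y ∈ F(p)`, choose `n` with `m⁻ⁿ < ε` and let `z` be the point of the `m`-adic interval of
length `m⁻ⁿ` containing `x` whose digits from position `n` on are those of `y`. Changing finitely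
many digits does not change the digit frequencies, so `z ∈ F(p)` and `H z = H y`.
-/

open Real Filter

/-- The `k+1`-st digit of `x` in the `m`-ary expansion, obtained by iterating
`T_m y = m·y - ⌊m·y⌋`. -/
noncomputable def mDigit (m k : ℕ) (x : ℝ) : ℤ :=
  ⌊(m : ℝ) * (fun y => Int.fract ((m : ℝ) * y))^[k] x⌋

/-- The set `F(p)` of `p`-quasinormal numbers in `[0,1)` for the `m`-ary expansion. -/
def mFreqSet (m : ℕ) (p : ℕ → ℝ) : Set ℝ :=
  {x ∈ Set.Ico (0 : ℝ) 1 | ∀ i < m,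
    Tendsto (fun n => (((Finset.range n).filter
        (fun k => mDigit m k x = (i : ℤ))).card : ℝ) / n) atTop (nhds (p i))}

open Finset Topology

section Pressure

lemma Summable.rpow_of_exponent_le {γ : ℕ → ℝ} {s t : ℝ} (hγ0 : ∀ j, 0 < γ j)
    (hγ1 : ∀ j, γ j ≤ 1) (hst : s ≤ t) (hs : Summable fun j => γ j ^ s) :
    Summable fun j => γ j ^ t :=
  .of_nonneg_of_le (fun j => (rpow_pos_of_pos (hγ0 j) t).le)
    (fun j => rpow_le_rpow_of_exponent_ge (hγ0 j) (hγ1 j) hst) hs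

lemma summable_rpow_of_sInf_lt {γ : ℕ → ℝ} {t : ℝ} (hγ0 : ∀ j, 0 < γ j) (hγ1 : ∀ j, γ j ≤ 1)
    (hγ : Summable γ) (ht : sInf {s : ℝ | 0 < s ∧ Summable fun j => γ j ^ s} < t) :
    Summable fun j => γ j ^ t := by
  have hone : (1 : ℝ) ∈ {s : ℝ | 0 < s ∧ Summable fun j => γ j ^ s} :=
    ⟨one_pos, by simpa only [rpow_one] using hγ⟩
  obtain ⟨s, ⟨-, hs⟩, hst⟩ := exists_lt_of_csInf_lt ⟨1, hone⟩ ht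
  exact hs.rpow_of_exponent_le hγ0 hγ1 hst.le

lemma strictAntiOn_tsum_rpow {γ : ℕ → ℝ} (hγ0 : ∀ j, 0 < γ j) (hγ1 : ∀ j, γ j < 1) :
    StrictAntiOn (fun t => ∑' j, γ j ^ t) {t : ℝ | Summable fun j => γ j ^ t} :=
  fun _ ha b _ hab =>
    Summable.tsum_lt_tsum_of_nonneg (i := 0) (fun j => (rpow_pos_of_pos (hγ0 j) b).le)
      (fun j => rpow_le_rpow_of_exponent_ge (hγ0 j) (hγ1 j).le hab.le)
      (rpow_lt_rpow_of_exponent_gt (hγ0 0) (hγ1 0) hab) ha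

/-- The left-hand side of the equation defining `h(p)`. -/
noncomputable def pressure (m : ℕ) (γ : ℕ → ℕ → ℝ) (p : ℕ → ℝ) (t : ℝ) : ℝ :=
  ∑ i ∈ range m, p i * log (∑' j, γ i j ^ t)

lemma strictAntiOn_pressure {m : ℕ} {γ : ℕ → ℕ → ℝ} {p : ℕ → ℝ} (hm : m ≠ 0)
    (hp : ∀ i < m, 0 < p i) (hγ0 : ∀ i < m, ∀ j, 0 < γ i j) (hγ1 : ∀ i < m, ∀ j, γ i j < 1) :
    StrictAntiOn (pressure m γ p) {t : ℝ | ∀ i < m, Summable fun j => γ i j ^ t} := by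
  intro a ha b hb hab
  refine sum_lt_sum_of_nonempty (nonempty_range_iff.2 hm) fun i hi => ?_
  rw [mem_range] at hi
  have hpos : 0 < ∑' j, γ i j ^ b :=
    (hb i hi).tsum_pos (fun j => (rpow_pos_of_pos (hγ0 i hi j) b).le) 0
      (rpow_pos_of_pos (hγ0 i hi 0) b)
  exact mul_lt_mul_of_pos_left
    (log_lt_log hpos (strictAntiOn_tsum_rpow (hγ0 i hi) (hγ1 i hi) (ha i hi) (hb i hi) hab))
    (hp i hi)

end Pressure

section Digits

lemma iterate_fract_mul_fract (m n : ℕ) (w : ℝ) :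
    (fun y => Int.fract ((m : ℝ) * y))^[n] (Int.fract w) = Int.fract ((m : ℝ) ^ n * w) := by
  induction n generalizing w with
  | zero => simp
  | succ n ih =>
    have hfract : Int.fract ((m : ℝ) * Int.fract w) = Int.fract ((m : ℝ) * w) := by
      have hsplit : (m : ℝ) * Int.fract w = (m : ℝ) * w - ((m * ⌊w⌋ : ℤ) : ℝ) := by
        rw [Int.fract]; push_cast; ring
      rw [hsplit, Int.fract_sub_intCast]
    rw [Function.iterate_succ_apply, hfract, ih, pow_succ, mul_assoc]

lemma mDigit_add {m : ℕ} {z : ℝ} (hz : z ∈ Set.Ico (0 : ℝ) 1) (k n : ℕ) :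
    mDigit m (k + n) z = mDigit m k (Int.fract ((m : ℝ) ^ n * z)) := by
  rw [mDigit, mDigit, Function.iterate_add_apply, ← Int.fract_eq_self.2 hz,
    iterate_fract_mul_fract, Int.fract_eq_self.2 hz]

lemma card_filter_range_add (P : ℕ → Prop) [DecidablePred P] (n M : ℕ) :
    #{k ∈ range (n + M) | P k} = #{k ∈ range n | P k} + #{k ∈ range M | P (n + k)} := by
  simp only [card_filter, sum_range_add]

lemma tendsto_const_add_div_add {u : ℕ → ℝ} {p : ℝ} (c a : ℝ)
    (hu : Tendsto (fun M => u M / M) atTop (𝓝 p)) :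
    Tendsto (fun M : ℕ => (c + u M) / (M + a)) atTop (𝓝 p) := by
  have hlim := ((tendsto_const_div_atTop_nhds_zero_nat c).add hu).mul
    (tendsto_natCast_div_add_atTop a)
  rw [zero_add, mul_one] at hlim
  refine hlim.congr' ?_
  filter_upwards [eventually_ne_atTop 0] with M hM
  field_simp

lemma mem_mFreqSet_of_fract_pow_mul_mem {m n : ℕ} {p : ℕ → ℝ} {z : ℝ}
    (hz : z ∈ Set.Ico (0 : ℝ) 1) (hy : Int.fract ((m : ℝ) ^ n * z) ∈ mFreqSet m p) :
    z ∈ mFreqSet m p := by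
  refine ⟨hz, fun i hi => ?_⟩
  rw [← tendsto_add_atTop_iff_nat n]
  have hcount : ∀ M, #{k ∈ range (M + n) | mDigit m k z = i} =
      #{k ∈ range n | mDigit m k z = i} +
        #{k ∈ range M | mDigit m k (Int.fract ((m : ℝ) ^ n * z)) = i} := by
    intro M
    rw [add_comm M n, card_filter_range_add]
    simp only [add_comm n, mDigit_add hz]
  simpa only [hcount, Nat.cast_add] using
    tendsto_const_add_div_add _ (n : ℝ) (hy.2 i hi)

lemma exists_fract_pow_mul_eq {m : ℕ} (hm : 1 < m) {x y ε : ℝ} (hx : x ∈ Set.Ico (0 : ℝ) 1)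
    (hy : y ∈ Set.Ico (0 : ℝ) 1) (hε : 0 < ε) :
    ∃ n : ℕ, ∃ z ∈ Set.Ico (0 : ℝ) 1, z ∈ Set.Ioo (x - ε) (x + ε) ∧
      Int.fract ((m : ℝ) ^ n * z) = y := by
  obtain ⟨n, hn⟩ := pow_unbounded_of_one_lt (1 / ε) (Nat.one_lt_cast.2 hm)
  set N := (m : ℝ) ^ n
  have hN : 0 < N := (one_div_pos.2 hε).trans hn
  have hεN : 1 < ε * N := by rwa [div_lt_iff₀' hε] at hn
  set K := ⌊N * x⌋
  have hK0 : (0 : ℝ) ≤ K := Int.cast_nonneg_iff.2 (Int.floor_nonneg.2 (mul_nonneg hN.le hx.1))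
  have hKle : (K : ℝ) ≤ N * x := Int.floor_le _
  have hKlt : N * x < K + 1 := Int.lt_floor_add_one _
  have hKN : (K : ℝ) + 1 ≤ N := by
    have hK : K < ((m ^ n : ℕ) : ℤ) :=
      Int.floor_lt.2 (by push_cast; exact mul_lt_of_lt_one_right hN hx.2)
    simpa [N] using (Int.cast_le (R := ℝ)).2 (Int.add_one_le_of_lt hK)
  refine ⟨n, (K + y) / N, ⟨div_nonneg (by linarith [hy.1]) hN.le, ?_⟩, ⟨?_, ?_⟩, ?_⟩
  · rw [div_lt_one hN]
    linarith [hy.2]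
  · rw [lt_div_iff₀ hN]
    linarith [hy.1]
  · rw [div_lt_iff₀ hN]
    linarith [hy.2]
  · rw [mul_div_cancel₀ _ hN.ne', Int.fract_intCast_add, Int.fract_eq_self.2 hy]

lemma exists_mem_mFreqSet_mem_Ioo {m : ℕ} (hm : 1 < m) {p : ℕ → ℝ} {x y ε : ℝ}
    (hx : x ∈ Set.Ico (0 : ℝ) 1) (hy : y ∈ mFreqSet m p) (hε : 0 < ε) :
    ∃ z ∈ mFreqSet m p, z ∈ Set.Ioo (x - ε) (x + ε) := by
  obtain ⟨n, z, hz, hzx, hzy⟩ := exists_fract_pow_mul_eq hm hx hy.1 hε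
  exact ⟨z, mem_mFreqSet_of_fract_pow_mul_mem hz (hzy ▸ hy), hzx⟩

end Digits

theorem Hm_constant_on_freq_sets_and_locally_full_range_general
    (m : ℕ) (hm : 2 ≤ m) (γ : ℕ → ℕ → ℝ)
    (hγpos : ∀ i < m, ∀ j, 0 < γ i j)
    (hγsum : ∀ i < m, Summable (fun j => γ i j))
    (hγsup : ∃ C : ℝ, C < 1 ∧ ∀ i < m, ∀ j, γ i j ≤ C)
    (θ : ℝ)
    (hθ : θ = ⨆ i : Fin m, sInf {t : ℝ | 0 < t ∧ Summable (fun j => γ i j ^ t)})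
    (Q : Set ℝ)
    (hQ : Q = {x | ∃ p : ℕ → ℝ, (∀ i < m, 0 < p i) ∧
      (∑ i ∈ Finset.range m, p i = 1) ∧ x ∈ mFreqSet m p})
    (H : ℝ → ℝ)
    (hH : ∀ p : ℕ → ℝ, (∀ i < m, 0 < p i) → (∑ i ∈ Finset.range m, p i = 1) →
      ∀ x ∈ mFreqSet m p, θ < H x ∧
        ∑ i ∈ Finset.range m, p i * Real.log (∑' j, γ i j ^ (H x)) = 0) :
    (∀ p : ℕ → ℝ, (∀ i < m, 0 < p i) → (∑ i ∈ Finset.range m, p i = 1) →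
      ∀ x ∈ mFreqSet m p, ∀ y ∈ mFreqSet m p, H x = H y) ∧
    (∀ x ∈ Q, ∀ ε : ℝ, 0 < ε →
      H '' (Q ∩ Set.Ioo (x - ε) (x + ε)) = H '' Q) := by
  obtain ⟨C, hC1, hγC⟩ := hγsup
  have hγ1 : ∀ i < m, ∀ j, γ i j < 1 := fun i hi j => (hγC i hi j).trans_lt hC1
  have hsum : ∀ t, θ < t → ∀ i < m, Summable fun j => γ i j ^ t := fun t ht i hi =>
    summable_rpow_of_sInf_lt (hγpos i hi) (fun j => (hγ1 i hi j).le) (hγsum i hi)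
      ((hθ ▸ le_ciSup (Set.finite_range _).bddAbove (⟨i, hi⟩ : Fin m)).trans_lt ht)
  have hconst : ∀ p : ℕ → ℝ, (∀ i < m, 0 < p i) → (∑ i ∈ Finset.range m, p i = 1) →
      ∀ x ∈ mFreqSet m p, ∀ y ∈ mFreqSet m p, H x = H y := by
    intro p hp hp1 x hx y hy
    obtain ⟨hθx, hx0⟩ := hH p hp hp1 x hx
    obtain ⟨hθy, hy0⟩ := hH p hp hp1 y hy
    exact (strictAntiOn_pressure (by omega) hp hγpos hγ1).injOn (hsum _ hθx) (hsum _ hθy)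
      (hx0.trans hy0.symm)
  refine ⟨hconst, fun x hx ε hε => ?_⟩
  subst hQ
  refine (Set.image_mono Set.inter_subset_left).antisymm ?_
  rintro _ ⟨y, ⟨p, hp, hp1, hy⟩, rfl⟩
  obtain ⟨_, -, -, hxF⟩ := hx
  obtain ⟨z, hz, hzx⟩ := exists_mem_mFreqSet_mem_Ioo (by omega) hxF.1 hy hε
  exact ⟨z, ⟨⟨p, hp, hp1, hz⟩, hzx⟩, hconst p hp hp1 z hz y hy⟩

/-- The dimension function `H_m` is constant on each set `F(p)`, and on any
neighbourhood of any quasinormal number it already attains all of its possible values. -/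
theorem Hm_constant_on_freq_sets_and_locally_full_range
    (m : ℕ) (hm : 2 ≤ m) (γ : ℕ → ℕ → ℝ)
    (hγpos : ∀ i < m, ∀ j, 0 < γ i j)
    (hγsum : ∀ i < m, Summable (fun j => γ i j))
    (hγsup : ∃ C : ℝ, C < 1 ∧ ∀ i < m, ∀ j, γ i j ≤ C)
    (θ : ℝ)
    (hθ : θ = ⨆ i : Fin m, sInf {t : ℝ | 0 < t ∧ Summable (fun j => γ i j ^ t)})
    (hdiv : ∃ i₀ < m, ¬ Summable (fun j => γ i₀ j ^ θ))
    (Q : Set ℝ)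
    (hQ : Q = {x | ∃ p : ℕ → ℝ, (∀ i < m, 0 < p i) ∧
      (∑ i ∈ Finset.range m, p i = 1) ∧ x ∈ mFreqSet m p})
    (H : ℝ → ℝ)
    (hH : ∀ p : ℕ → ℝ, (∀ i < m, 0 < p i) → (∑ i ∈ Finset.range m, p i = 1) →
      ∀ x ∈ mFreqSet m p, θ < H x ∧
        ∑ i ∈ Finset.range m, p i * Real.log (∑' j, γ i j ^ (H x)) = 0) :
    (∀ p : ℕ → ℝ, (∀ i < m, 0 < p i) → (∑ i ∈ Finset.range m, p i = 1) →
      ∀ x ∈ mFreqSet m p, ∀ y ∈ mFreqSet m p, H x = H y) ∧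
    (∀ x ∈ Q, ∀ ε : ℝ, 0 < ε →
      H '' (Q ∩ Set.Ioo (x - ε) (x + ε)) = H '' Q) :=
  Hm_constant_on_freq_sets_and_locally_full_range_general m hm γ hγpos hγsum hγsup θ hθ Q hQ H hH
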